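/- arXiv:2008.02717 — 5 statements merged into one kernel-verified Lean document; each statement's English description precedes it below -/
import Mathlib

section
/- Let q be a prime power and k ≥ 3 an integer. The number of elements B in the multiplicative group of F_{q^k} such that the polynomial X^{q+1} - B·X + B splits completely into linear factors over F_{q^k} equals (q^{k-1} - 1)/(q^2 - 1) if k is odd, and (q^{k-1} - q)/(q^2 - 1) if k is even. -/
/-!
If `x`, `a`, `b` are distinct roots of `F_B`, then `b / a = ((x - a) / (x - b)) ^ (q - 1)`;
so when `F_B` splits, the ratio of any two of its roots is a `(q - 1)`-th power. Conversely, two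
roots `a ≠ b` with `b / a = t ^ (q - 1)` already force `F_B` to split: the other roots are the
`(a - b u) / (1 - u)` with `u ∈ t • 𝔽_q`. The ratio `s = b / a` determines `a`, `b` and `B`, so
`(B, a, b) ↦ b / a` is a bijection from ordered pairs of distinct roots of split `F_B` onto the
`s` with `s ^ n = 1 ≠ s ^ (q + 1)`, where `n = (q^k - 1) / (q - 1)`. So the number `N` of
Bluher values satisfies `N q (q + 1) = n - gcd(n, q + 1)`, and `gcd(n, q + 1)` is `1` or `q + 1`
according to the parity of `k`.
-/

open Polynomial Finset

theorem IsCyclic.range_powMonoidHom_eq_ker {G : Type*} [CommGroup G] [IsCyclic G] [Finite G]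
    {d e : ℕ} (hde : d * e = Nat.card G) :
    (powMonoidHom e : G →* G).range = (powMonoidHom d).ker := by
  have he : e ≠ 0 := right_ne_zero_of_mul (hde ▸ Nat.card_pos.ne')
  refine Subgroup.eq_of_le_of_card_ge ?_ ?_
  · rintro _ ⟨t, rfl⟩
    rw [MonoidHom.mem_ker, powMonoidHom_apply, powMonoidHom_apply, ← pow_mul, mul_comm, hde,
      pow_card_eq_one']
  · rw [card_powMonoidHom_ker, card_powMonoidHom_range, ← hde, Nat.gcd_mul_left_left,
      Nat.gcd_mul_right_left, Nat.mul_div_cancel _ (Nat.pos_of_ne_zero he)]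

namespace FiniteField

variable {F : Type*} [Field F] [Fintype F]

theorem card_pow_eq_one [DecidableEq F] {d : ℕ} (hd : d ≠ 0) :
    #{x : F | x ^ d = 1} = (Fintype.card F - 1).gcd d := by
  have hker : Nat.card (powMonoidHom d : Fˣ →* Fˣ).ker = (Fintype.card F - 1).gcd d := by
    rw [IsCyclic.card_powMonoidHom_ker, Nat.card_eq_fintype_card, Fintype.card_units]
  rw [← hker, ← Fintype.card_subtype, ← Nat.card_eq_fintype_card]
  refine Nat.card_congr
    { toFun := fun x => ⟨Units.mk0 x (fun h => by simpa [h, hd] using x.2), ?_⟩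
      invFun := fun u => ⟨u.1, by simpa [Units.ext_iff] using MonoidHom.mem_ker.mp u.2⟩
      left_inv := fun x => rfl
      right_inv := fun u => Subtype.ext (Units.ext rfl) }
  simp [MonoidHom.mem_ker, Units.ext_iff, x.2]

theorem card_pow_succ_eq_self [DecidableEq F] {d : ℕ} (hd : d ≠ 0) :
    #{x : F | x ^ (d + 1) = x} = (Fintype.card F - 1).gcd d + 1 := by
  have : ({x : F | x ^ (d + 1) = x} : Finset F) = insert 0 ({x | x ^ d = 1} : Finset F) := by
    ext x
    rcases eq_or_ne x 0 with rfl | hx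
    · simp
    · simp [hx, pow_succ]
  rw [this, card_insert_of_notMem (by simp [hd]), card_pow_eq_one hd]

theorem exists_pow_eq_iff_pow_eq_one {d e : ℕ} (hde : d * e = Fintype.card F - 1) {s : F} :
    (∃ t ≠ 0, t ^ e = s) ↔ s ^ d = 1 := by
  classical
  have hN : Fintype.card F - 1 ≠ 0 := by have := Fintype.one_lt_card (α := F); omega
  have hd : d ≠ 0 := left_ne_zero_of_mul (hde ▸ hN)
  constructor
  · rintro ⟨t, ht, rfl⟩
    rw [← pow_mul, mul_comm, hde, pow_card_sub_one_eq_one t ht]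
  · intro hs
    have hrange := IsCyclic.range_powMonoidHom_eq_ker (G := Fˣ)
      (by rwa [Nat.card_eq_fintype_card, Fintype.card_units])
    have hs0 : s ≠ 0 := by rintro rfl; simp [hd] at hs
    obtain ⟨t, ht⟩ := hrange.ge (show Units.mk0 s hs0 ∈ (powMonoidHom d).ker by
      simp [MonoidHom.mem_ker, Units.ext_iff, hs])
    exact ⟨t, t.ne_zero, by simpa [Units.ext_iff] using ht⟩

theorem card_pow_eq_one_and_pow_ne_one [DecidableEq F] {n d : ℕ} (hn : n ∣ Fintype.card F - 1) :
    #{s : F | s ^ n = 1 ∧ s ^ d ≠ 1} = n - n.gcd d := by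
  have hN : Fintype.card F - 1 ≠ 0 := by have := Fintype.one_lt_card (α := F); omega
  have hn0 : n ≠ 0 := ne_zero_of_dvd_ne_zero hN hn
  have hboth :
      ({s : F | s ^ n = 1 ∧ s ^ d = 1} : Finset F) = ({s | s ^ n.gcd d = 1} : Finset F) := by
    ext s
    simp only [mem_filter, mem_univ, true_and]
    exact pow_gcd_eq_one.symm
  have hsplit := card_filter_add_card_filter_not (s := ({s : F | s ^ n = 1} : Finset F))
    (p := fun s => s ^ d = 1)
  rw [filter_filter, filter_filter, hboth, card_pow_eq_one hn0,
    card_pow_eq_one (Nat.gcd_ne_zero_left hn0), Nat.gcd_eq_right hn,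
    Nat.gcd_eq_right ((Nat.gcd_dvd_left n d).trans hn)] at hsplit
  simp only [ne_eq]
  omega

end FiniteField

theorem Nat.gcd_geomSum_add_one (q k : ℕ) :
    (∑ i ∈ range k, q ^ i).gcd (q + 1) = if Odd k then 1 else q + 1 := by
  induction k using Nat.twoStepInduction with
  | zero => simp
  | one => simp
  | more k ih _ =>
    have : ∑ i ∈ range (k + 2), q ^ i = ∑ i ∈ range k, q ^ i + q ^ k * (q + 1) := by
      rw [sum_range_succ, sum_range_succ]; ring
    rw [this, Nat.gcd_add_mul_right_left, ih]
    simp [Nat.odd_add]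

theorem eq_ite_of_mul_eq_geomSum_sub_gcd {q k N : ℕ} (hq : 1 < q) (hk : k ≠ 0)
    (h : N * ((q + 1) * q) = ∑ i ∈ range k, q ^ i - (∑ i ∈ range k, q ^ i).gcd (q + 1)) :
    N = if Odd k then (q ^ (k - 1) - 1) / (q ^ 2 - 1) else (q ^ (k - 1) - q) / (q ^ 2 - 1) := by
  set n := ∑ i ∈ range k, q ^ i with hn
  have hgeom : ((q : ℤ) - 1) * n = q ^ k - 1 := by rw [hn]; push_cast; exact mul_geom_sum _ _
  have hqk : (q : ℤ) ^ k = q * q ^ (k - 1) := by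
    rw [← pow_succ', Nat.sub_add_cancel (Nat.pos_of_ne_zero hk)]
  have hg : n.gcd (q + 1) ≤ n := Nat.gcd_le_left _ (by positivity)
  have hq2 : 0 < q ^ 2 - 1 := by have := Nat.pow_lt_pow_left hq two_ne_zero; omega
  have hqz : (q : ℤ) ≠ 0 := by positivity
  rw [Nat.gcd_geomSum_add_one] at h hg
  split_ifs at h hg ⊢ with hodd
  · refine (Nat.div_eq_of_eq_mul_left hq2 ?_).symm
    zify [Nat.one_le_pow _ _ (by omega : 0 < q), Nat.one_le_pow 2 q (by omega), hg] at h ⊢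
    refine mul_left_cancel₀ hqz ?_
    linear_combination -(q - 1) * h - hgeom - hqk
  · refine (Nat.div_eq_of_eq_mul_left hq2 ?_).symm
    have hk1 : k - 1 ≠ 0 := fun h1 => hodd (by rw [show k = 1 by omega]; exact odd_one)
    zify [Nat.le_self_pow hk1 q, Nat.one_le_pow 2 q (by omega), hg] at h ⊢
    refine mul_left_cancel₀ hqz ?_
    linear_combination -(q - 1) * h - hgeom - hqk

section Bluher

variable {F : Type*} [Field F] {q : ℕ}

noncomputable def bluherPoly (q : ℕ) (B : F) : F[X] := X ^ (q + 1) - C B * X + C B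

theorem natDegree_bluherPoly (hq : q ≠ 0) (B : F) : (bluherPoly q B).natDegree = q + 1 := by
  unfold bluherPoly; compute_degree!; simp [hq]

theorem monic_bluherPoly (hq : q ≠ 0) (B : F) : (bluherPoly q B).Monic := by
  unfold bluherPoly; monicity!; exact fun h => absurd h hq

theorem separable_bluherPoly (hqF : (q : F) = 0) {B : F} (hB : B ≠ 0) :
    (bluherPoly q B).Separable := by
  have hder : derivative (bluherPoly q B) = X ^ q - C B := by simp [bluherPoly, hqF]
  have hBB : C B⁻¹ * C B = 1 := by rw [← C_mul, inv_mul_cancel₀ hB, C_1]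
  refine ⟨C B⁻¹, -C B⁻¹ * X, ?_⟩
  rw [hder, bluherPoly]
  linear_combination hBB

variable [Fintype F] [DecidableEq F]

def bluherRoots (q : ℕ) (B : F) : Finset F := {x | x ^ (q + 1) - B * x + B = 0}

@[simp]
theorem mem_bluherRoots {B x : F} : x ∈ bluherRoots q B ↔ x ^ (q + 1) - B * x + B = 0 := by
  simp [bluherRoots]

theorem roots_bluherPoly_toFinset (hq : q ≠ 0) (B : F) :
    (bluherPoly q B).roots.toFinset = bluherRoots q B := by
  ext x
  rw [Multiset.mem_toFinset, mem_roots (monic_bluherPoly hq B).ne_zero, IsRoot.def,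
    mem_bluherRoots]
  simp [bluherPoly]

theorem card_bluherRoots_le (hq : q ≠ 0) (B : F) : #(bluherRoots q B) ≤ q + 1 := by
  rw [← roots_bluherPoly_toFinset hq, ← natDegree_bluherPoly hq B]
  exact (Multiset.toFinset_card_le _).trans (card_roots' _)

theorem splits_bluherPoly_iff (hq : q ≠ 0) (hqF : (q : F) = 0) {B : F} (hB : B ≠ 0) :
    (bluherPoly q B).Splits ↔ #(bluherRoots q B) = q + 1 := by
  rw [splits_iff_card_roots, natDegree_bluherPoly hq, ← roots_bluherPoly_toFinset hq,
    Multiset.toFinset_card_of_nodup (nodup_roots (separable_bluherPoly hqF hB))]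

theorem ne_zero_of_mem_bluherRoots {B x : F} (hB : B ≠ 0) (hx : x ∈ bluherRoots q B) :
    x ≠ 0 := by
  rintro rfl
  simp [hB] at hx

theorem ne_one_of_mem_bluherRoots {B x : F} (hx : x ∈ bluherRoots q B) : x ≠ 1 := by
  rintro rfl
  simp at hx

theorem mem_bluherRoots_iff_eq_div {B x : F} (hx : x ≠ 1) :
    x ∈ bluherRoots q B ↔ B = x ^ (q + 1) / (x - 1) := by
  rw [mem_bluherRoots, eq_div_iff (sub_ne_zero.mpr hx)]
  constructor <;> intro h <;> linear_combination -h

theorem mul_mem_bluherRoots_iff {B a : F} (s : F) (hB : B ≠ 0) (ha : a ∈ bluherRoots q B) :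
    s * a ∈ bluherRoots q B ↔ a * (s - s ^ (q + 1)) = 1 - s ^ (q + 1) := by
  rw [mem_bluherRoots] at ha ⊢
  have : (s * a) ^ (q + 1) - B * (s * a) + B = B * (1 - s ^ (q + 1) - a * (s - s ^ (q + 1))) := by
    linear_combination s ^ (q + 1) * ha
  rw [this, mul_eq_zero, or_iff_right hB, sub_eq_zero, eq_comm]

/-- The solution `a` of `a ^ (q + 1) / (a - 1) = (s * a) ^ (q + 1) / (s * a - 1)`. -/
noncomputable def bluherRootOfRatio (q : ℕ) (s : F) : F := (1 - s ^ (q + 1)) / (s - s ^ (q + 1))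

theorem div_pow_succ_ne_one {B a b : F} (hB : B ≠ 0) (ha : a ∈ bluherRoots q B)
    (hb : b ∈ bluherRoots q B) (hab : a ≠ b) : (b / a) ^ (q + 1) ≠ 1 := by
  have ha0 := ne_zero_of_mem_bluherRoots hB ha
  intro h1
  have := (mul_mem_bluherRoots_iff (b / a) hB ha).mp (by rwa [div_mul_cancel₀ b ha0])
  rw [h1, sub_self, mul_eq_zero, sub_eq_zero, div_eq_one_iff_eq ha0] at this
  exact this.elim ha0 (Ne.symm hab)

theorem eq_bluherRootOfRatio {B a b : F} (hB : B ≠ 0) (ha : a ∈ bluherRoots q B)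
    (hb : b ∈ bluherRoots q B) (hab : a ≠ b) : a = bluherRootOfRatio q (b / a) := by
  have hs := div_pow_succ_ne_one hB ha hb hab
  have h := (mul_mem_bluherRoots_iff (b / a) hB ha).mp
    (by rwa [div_mul_cancel₀ b (ne_zero_of_mem_bluherRoots hB ha)])
  have hden : b / a - (b / a) ^ (q + 1) ≠ 0 := by
    intro h0
    rw [h0, mul_zero, eq_comm, sub_eq_zero] at h
    exact hs h.symm
  exact eq_div_of_mul_eq hden h

section Frobenius

variable {p m : ℕ} [ExpChar F p]

theorem eq_mul_pow_of_mem_bluherRoots (hq : q = p ^ m) {B a b x : F} (ha : a ∈ bluherRoots q B)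
    (hb : b ∈ bluherRoots q B) (hx : x ∈ bluherRoots q B) (hxa : x ≠ a) (hxb : x ≠ b) :
    b = a * ((x - a) / (x - b)) ^ (q - 1) := by
  subst hq
  have hq1 : p ^ m - 1 + 1 = p ^ m := Nat.sub_add_cancel (Nat.one_le_pow _ _ (expChar_pos F p))
  set t := (x - a) / (x - b)
  have ht : t ≠ 0 := div_ne_zero (sub_ne_zero.mpr hxa) (sub_ne_zero.mpr hxb)
  have hxb' : x ^ p ^ m - b ^ p ^ m ≠ 0 := by
    rw [← sub_pow_expChar_pow]; exact pow_ne_zero _ (sub_ne_zero.mpr hxb)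
  have key : a * t ^ p ^ m = b * t := by
    rw [div_pow, sub_pow_expChar_pow, sub_pow_expChar_pow, mul_div_assoc', mul_div_assoc',
      div_eq_div_iff hxb' (sub_ne_zero.mpr hxb)]
    rw [mem_bluherRoots] at ha hb hx
    linear_combination (a - b) * hx - (x - b) * ha + (x - a) * hb
  apply mul_right_cancel₀ ht
  rw [mul_assoc, ← pow_succ, hq1, key]

theorem exists_eq_mul_pow_of_two_lt_card (hq : q = p ^ m) {B a b : F}
    (h3 : 2 < #(bluherRoots q B)) (ha : a ∈ bluherRoots q B) (hb : b ∈ bluherRoots q B) :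
    ∃ t ≠ 0, b = a * t ^ (q - 1) := by
  obtain ⟨x, hx, hxab⟩ : ∃ x ∈ bluherRoots q B, x ∉ ({a, b} : Finset F) :=
    exists_mem_notMem_of_card_lt_card ((card_le_two).trans_lt h3)
  rw [mem_insert, mem_singleton, not_or] at hxab
  exact ⟨_, div_ne_zero (sub_ne_zero.mpr hxab.1) (sub_ne_zero.mpr hxab.2),
    eq_mul_pow_of_mem_bluherRoots hq ha hb hx hxab.1 hxab.2⟩

theorem mem_bluherRoots_of_mul_pow_eq (hq : q = p ^ m) {B a b u : F} (hB : B ≠ 0)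
    (ha : a ∈ bluherRoots q B) (hb : b ∈ bluherRoots q B) (hu : u ≠ 1)
    (hau : a * u ^ q = b * u) :
    (a - b * u) / (1 - u) ∈ bluherRoots q B := by
  have hab : a * b ≠ 0 :=
    mul_ne_zero (ne_zero_of_mem_bluherRoots hB ha) (ne_zero_of_mem_bluherRoots hB hb)
  have hu' : 1 - u ≠ 0 := sub_ne_zero.mpr hu.symm
  have hfrob : (1 - u) ^ q = 1 - u ^ q := by subst hq; rw [sub_pow_expChar_pow, one_pow]
  have hfrob' : (a - b * u) ^ q = a ^ q - b ^ q * u ^ q := by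
    subst hq; rw [sub_pow_expChar_pow, mul_pow]
  have huq : 1 - u ^ q ≠ 0 := hfrob ▸ pow_ne_zero q hu'
  rw [mem_bluherRoots] at ha hb ⊢
  have key : (a ^ q - b ^ q * u ^ q) * (a - b * u) - B * (a - b * u) * (1 - u ^ q)
      + B * (1 - u ^ q) * (1 - u) = 0 := by
    refine (mul_eq_zero.mp ?_).resolve_right hab
    linear_combination (b * (a - b * u)) * ha - (u ^ q * a * (a - b * u)) * hb
      + (B * b * (a - b * u) - B * (b - 1) * (a - b * u) - B * b * (1 - u)) * hau
  rw [pow_succ, div_pow, hfrob', hfrob]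
  field_simp
  linear_combination key

theorem card_bluherRoots_of_eq_mul_pow (hq : q = p ^ m) (hq1 : 1 < q)
    (hqF : q - 1 ∣ Fintype.card F - 1) {B a b t : F} (hB : B ≠ 0) (ha : a ∈ bluherRoots q B)
    (hb : b ∈ bluherRoots q B) (hab : a ≠ b) (ht : t ≠ 0) (hbt : b = a * t ^ (q - 1)) :
    #(bluherRoots q B) = q + 1 := by
  have hq1' : q - 1 + 1 = q := Nat.sub_add_cancel hq1.le
  set V : Finset F := ({z | z ^ q = z} : Finset F).image (t * ·)
  have hV : #V = q := by
    have := FiniteField.card_pow_succ_eq_self (F := F) (d := q - 1) (by omega)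
    rwa [hq1', Nat.gcd_eq_right hqF, hq1', ← card_image_of_injective _ (mul_right_injective₀ ht)]
      at this
  have hVeq : ∀ u ∈ V, a * u ^ q = b * u := by
    intro u hu
    obtain ⟨z, hz, rfl⟩ := mem_image.mp hu
    rw [mem_filter] at hz
    rw [mul_pow, hz.2, hbt, ← pow_mul_pow_sub t hq1.le, pow_one]
    ring
  have hV1 : ∀ u ∈ V, u ≠ 1 := fun u hu h1 => hab (by simpa [h1] using hVeq u hu)
  set ψ : F → F := fun u => (a - b * u) / (1 - u)
  have hψ : Set.InjOn ψ V := by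
    intro u hu v hv huv
    have hu' : 1 - u ≠ 0 := sub_ne_zero.mpr (hV1 u hu).symm
    have hv' : 1 - v ≠ 0 := sub_ne_zero.mpr (hV1 v hv).symm
    rw [div_eq_div_iff hu' hv'] at huv
    have : (a - b) * (u - v) = 0 := by linear_combination huv
    exact sub_eq_zero.mp ((mul_eq_zero.mp this).resolve_left (sub_ne_zero.mpr hab))
  have hbψ : b ∉ V.image ψ := by
    intro hb'
    obtain ⟨u, hu, hub⟩ := mem_image.mp hb'
    rw [div_eq_iff (sub_ne_zero.mpr (hV1 u hu).symm)] at hub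
    exact hab (by linear_combination hub)
  have hsub : insert b (V.image ψ) ⊆ bluherRoots q B := by
    refine insert_subset hb (image_subset_iff.mpr fun u hu => ?_)
    exact mem_bluherRoots_of_mul_pow_eq hq hB ha hb (hV1 u hu) (hVeq u hu)
  refine le_antisymm (card_bluherRoots_le (by omega) B) ?_
  calc q + 1 = #(insert b (V.image ψ)) := by
        rw [card_insert_of_notMem hbψ, card_image_of_injOn hψ, hV]
    _ ≤ #(bluherRoots q B) := card_le_card hsub

theorem exists_mem_bluherRoots_bluherRootOfRatio (hq : q = p ^ m) {s : F}
    (hs0 : s ≠ 0) (hs : s ^ (q + 1) ≠ 1) :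
    ∃ B ≠ 0, bluherRootOfRatio q s ∈ bluherRoots q B ∧
      s * bluherRootOfRatio q s ∈ bluherRoots q B := by
  have hsq : s ^ q ≠ 1 := by
    intro h
    subst hq
    have : s = 1 := iterateFrobenius_inj F p m (by simp [iterateFrobenius_def, h])
    simp [this] at hs
  have hden : s - s ^ (q + 1) ≠ 0 := by
    rw [pow_succ', ← mul_one_sub]
    exact mul_ne_zero hs0 (sub_ne_zero.mpr (Ne.symm hsq))
  have hnum : 1 - s ^ (q + 1) ≠ 0 := sub_ne_zero.mpr (Ne.symm hs)
  set a := bluherRootOfRatio q s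
  have ha : a * (s - s ^ (q + 1)) = 1 - s ^ (q + 1) := div_mul_cancel₀ _ hden
  have ha0 : a ≠ 0 := div_ne_zero hnum hden
  have ha1 : a ≠ 1 := by
    rintro h1
    rw [h1, one_mul, sub_left_inj] at ha
    exact hs (by simp [ha])
  refine ⟨a ^ (q + 1) / (a - 1), div_ne_zero (pow_ne_zero _ ha0) (sub_ne_zero.mpr ha1), ?_⟩
  have haB : a ∈ bluherRoots q (a ^ (q + 1) / (a - 1)) :=
    (mem_bluherRoots_iff_eq_div ha1).mpr rfl
  exact ⟨haB, (mul_mem_bluherRoots_iff s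
    (div_ne_zero (pow_ne_zero _ ha0) (sub_ne_zero.mpr ha1)) haB).mpr ha⟩

def bluherValues (q : ℕ) : Finset F := {B | B ≠ 0 ∧ #(bluherRoots q B) = q + 1}

theorem mem_bluherValues {B : F} :
    B ∈ bluherValues q ↔ B ≠ 0 ∧ #(bluherRoots q B) = q + 1 := by
  simp [bluherValues]

def bluherRootPairs (q : ℕ) : Finset (Σ _ : F, F × F) :=
  (bluherValues q).sigma fun B => (bluherRoots q B).offDiag

theorem mem_bluherRootPairs {B a b : F} :
    ⟨B, a, b⟩ ∈ bluherRootPairs q ↔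
      B ∈ bluherValues q ∧ a ∈ bluherRoots q B ∧ b ∈ bluherRoots q B ∧ a ≠ b := by
  simp [bluherRootPairs]

theorem card_bluherRootPairs :
    #(bluherRootPairs q : Finset (Σ _ : F, F × F)) =
      #(bluherValues q : Finset F) * ((q + 1) * q) := by
  rw [bluherRootPairs, card_sigma, sum_const_nat fun B hB => ?_]
  rw [offDiag_card, (mem_bluherValues.mp hB).2]
  exact Nat.sub_eq_of_eq_add (by ring)

theorem eq_of_mem_bluherRootPairs_of_div_eq {x y : Σ _ : F, F × F}
    (hx : x ∈ bluherRootPairs q) (hy : y ∈ bluherRootPairs q)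
    (hxy : x.2.2 / x.2.1 = y.2.2 / y.2.1) : x = y := by
  obtain ⟨B, a, b⟩ := x
  obtain ⟨B', a', b'⟩ := y
  obtain ⟨hB, ha, hb, hab⟩ := mem_bluherRootPairs.mp hx
  obtain ⟨hB', ha', hb', hab'⟩ := mem_bluherRootPairs.mp hy
  replace hB := (mem_bluherValues.mp hB).1
  replace hB' := (mem_bluherValues.mp hB').1
  dsimp only at hxy
  have haa' : a = a' := by
    rw [eq_bluherRootOfRatio hB ha hb hab, eq_bluherRootOfRatio hB' ha' hb' hab', hxy]
  have hbb' : b = b' := by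
    rw [← div_mul_cancel₀ b (ne_zero_of_mem_bluherRoots hB ha),
      ← div_mul_cancel₀ b' (ne_zero_of_mem_bluherRoots hB' ha'), hxy, haa']
  have hBB' : B = B' := by
    rw [(mem_bluherRoots_iff_eq_div (ne_one_of_mem_bluherRoots ha)).mp ha,
      (mem_bluherRoots_iff_eq_div (ne_one_of_mem_bluherRoots ha')).mp ha', haa']
  subst haa' hbb' hBB'
  rfl

theorem exists_mem_bluherRootPairs_div_eq (hq : q = p ^ m) (hq1 : 1 < q)
    (hqF : q - 1 ∣ Fintype.card F - 1) {t : F} (ht : t ≠ 0) (hs : (t ^ (q - 1)) ^ (q + 1) ≠ 1) :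
    ∃ x ∈ bluherRootPairs q, x.2.2 / x.2.1 = t ^ (q - 1) := by
  obtain ⟨B, hB, ha, hsa⟩ := exists_mem_bluherRoots_bluherRootOfRatio hq (pow_ne_zero _ ht) hs
  set a := bluherRootOfRatio q (t ^ (q - 1))
  have ha0 := ne_zero_of_mem_bluherRoots hB ha
  have hsa' : a ≠ t ^ (q - 1) * a := fun h => hs (by
    rw [(mul_eq_right₀ ha0).mp h.symm, one_pow])
  have hcard := card_bluherRoots_of_eq_mul_pow hq hq1 hqF hB ha hsa hsa' ht (mul_comm _ _)
  exact ⟨⟨B, a, t ^ (q - 1) * a⟩,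
    mem_bluherRootPairs.mpr ⟨mem_bluherValues.mpr ⟨hB, hcard⟩, ha, hsa, hsa'⟩,
    mul_div_cancel_right₀ _ ha0⟩

theorem card_bluherValues_mul (hq : q = p ^ m) (hq1 : 1 < q) {n : ℕ}
    (hn : n * (q - 1) = Fintype.card F - 1) :
    #(bluherValues q : Finset F) * ((q + 1) * q) = n - n.gcd (q + 1) := by
  rw [← card_bluherRootPairs, ← FiniteField.card_pow_eq_one_and_pow_ne_one (Dvd.intro _ hn)]
  refine card_bij (fun x _ => x.2.2 / x.2.1) ?_
    (fun x hx y hy => eq_of_mem_bluherRootPairs_of_div_eq hx hy) ?_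
  · rintro ⟨B, a, b⟩ h
    obtain ⟨hB, ha, hb, hab⟩ := mem_bluherRootPairs.mp h
    obtain ⟨hB, hcard⟩ := mem_bluherValues.mp hB
    obtain ⟨t, ht, hbt⟩ := exists_eq_mul_pow_of_two_lt_card hq (by omega) ha hb
    have hbt' : b / a = t ^ (q - 1) := by
      rw [hbt, mul_div_cancel_left₀ _ (ne_zero_of_mem_bluherRoots hB ha)]
    simp only [mem_filter, mem_univ, true_and]
    exact ⟨(FiniteField.exists_pow_eq_iff_pow_eq_one hn).mp ⟨t, ht, hbt'.symm⟩,
      div_pow_succ_ne_one hB ha hb hab⟩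
  · intro s hs
    obtain ⟨hsn, hs1⟩ := by simpa only [mem_filter, mem_univ, true_and] using hs
    obtain ⟨t, ht, rfl⟩ := (FiniteField.exists_pow_eq_iff_pow_eq_one hn).mpr hsn
    obtain ⟨x, hx, hxs⟩ := exists_mem_bluherRootPairs_div_eq hq hq1 (Dvd.intro_left _ hn) ht hs1
    exact ⟨x, hx, hxs⟩

end Frobenius

end Bluher

theorem bluher_count_general (p m q k : ℕ) (hp : p.Prime) (hm : 0 < m) (hq : q = p ^ m)
    (F : Type*) [Field F] [Fintype F] (hF : Fintype.card F = q ^ k) :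
    {B : F | B ≠ 0 ∧
        ((X ^ (q + 1) - C B * X + C B : Polynomial F).map (RingHom.id F)).Splits}.ncard =
      if Odd k then (q ^ (k - 1) - 1) / (q ^ 2 - 1) else (q ^ (k - 1) - q) / (q ^ 2 - 1) := by
  classical
  have : Fact p.Prime := ⟨hp⟩
  have : CharP F p := charP_of_card_eq_prime_pow (hF.trans (by rw [hq, ← pow_mul]))
  have hq1 : 1 < q := hq ▸ Nat.one_lt_pow hm.ne' hp.one_lt
  have hqF : (q : F) = 0 := by rw [hq, Nat.cast_pow, CharP.cast_eq_zero, zero_pow hm.ne']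
  have hk : k ≠ 0 := by
    rintro rfl
    exact (Fintype.one_lt_card (α := F)).ne' (by rw [hF, pow_zero])
  have hn : (∑ i ∈ range k, q ^ i) * (q - 1) = Fintype.card F - 1 := by
    have := geom_sum_mul_add (q - 1) k
    rw [Nat.sub_add_cancel hq1.le] at this
    omega
  have hvalues : {B : F | B ≠ 0 ∧
      ((X ^ (q + 1) - C B * X + C B : Polynomial F).map (RingHom.id F)).Splits} =
      ↑(bluherValues q : Finset F) := by
    ext B
    simp only [Set.mem_ofPred_eq, bluherValues, coe_filter, mem_univ, true_and, Polynomial.map_id]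
    exact and_congr_right fun hB => splits_bluherPoly_iff (by omega) hqF hB
  rw [hvalues, Set.ncard_coe_finset]
  exact eq_ite_of_mul_eq_geomSum_sub_gcd hq1 hk (card_bluherValues_mul hq hq1 hn)

/-- **Bluher's count** (Theorem 1 of the paper). Let `q = p^m` be a prime power and
`k ≥ 3`. In the finite field `F` with `q^k` elements, the number of `B ≠ 0` such that
`X^(q+1) - B·X + B` splits completely over `F` is `(q^(k-1)-1)/(q^2-1)` if `k` is odd and
`(q^(k-1)-q)/(q^2-1)` if `k` is even. -/
theorem bluher_count (p m q k : ℕ) (hp : p.Prime) (hm : 0 < m) (hq : q = p ^ m)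
    (hk : 3 ≤ k) (F : Type*) [Field F] [Fintype F] (hF : Fintype.card F = q ^ k) :
    {B : F | B ≠ 0 ∧
        ((X ^ (q + 1) - C B * X + C B : Polynomial F).map (RingHom.id F)).Splits}.ncard =
      if Odd k then (q ^ (k - 1) - 1) / (q ^ 2 - 1) else (q ^ (k - 1) - q) / (q ^ 2 - 1) :=
  bluher_count_general p m q k hp hm hq F hF
end

section
/- Let q be a prime power and k ≥ 3. Define polynomials P_1(X) = 1, P_2(X) = 1, and P_i(X) = P_{i-1}(X) - X^{q^{i-3}}·P_{i-2}(X) for i ≥ 3. Then for every B ∈ F_{q^k}^×, the polynomial X^{q+1} - B·X + B splits completely over F_{q^k} if and only if P_k(1/B) = 0. -/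
/-!
A root `x` of `f = X^(q+1) - B X + B` satisfies `x^q = B (x - 1) / x`, so `x ↦ x^q` acts on the
roots as the Möbius transformation of `M₀ = [[B, -B], [1, 0]]`, and `x^(q^k)` is the image of `x`
under `N_k = M_{k-1} ⋯ M₀`, where `M_j` is `M₀` with `B` replaced by `B^(q^j)`.
Since `f` is separable, it splits over `F = 𝔽_{q^k}` iff `f ∣ X^(q^k) - X`, i.e. iff `N_k` fixes
the root of `f` in `F[X]/(f)`. Such a fixed point is a root of a quadratic, which must vanish
because `deg f = q + 1 > 2`; so its leading coefficient, the lower left entry `c_k` of `N_k`,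
is `0`. Conversely, if `c_k = 0`, then `B^(q^k) = B` gives `M_k = M₀`, and comparing
`N_{k+1} = M₀ N_k` with the Frobenius twist `N_{k+1} = N_k^(q) M₀` shows that `N_k` is a nonzero
scalar matrix. Finally `c_k` satisfies the recurrence of `P_k` up to a power of `B`:
`c_k = B^(1 + q + ⋯ + q^(k-2)) P_k(1/B)`.
-/

open Polynomial Finset

noncomputable def bluherP (q : ℕ) (R : Type*) [CommRing R] : ℕ → Polynomial R
  | 0 => 1
  | 1 => 1
  | 2 => 1
  | (n + 3) => bluherP q R (n + 2) - X ^ (q ^ n) * bluherP q R (n + 1)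

theorem MonoidHom.succ_eq_map_mul_of_twisted_recurrence {G : Type*} [Monoid G] (φ : G →* G)
    {M N : ℕ → G} (hM : ∀ j, M (j + 1) = φ (M j)) (hN0 : N 0 = 1)
    (hN : ∀ i, N (i + 1) = M i * N i) (i : ℕ) :
    N (i + 1) = φ (N i) * M 0 := by
  induction i with
  | zero => rw [hN, hN0, map_one, mul_one, one_mul]
  | succ i ih =>
    calc N (i + 2) = φ (M i) * (φ (N i) * M 0) := by rw [hN, hM, ih]
      _ = φ (N (i + 1)) * M 0 := by rw [hN, map_mul, mul_assoc]

theorem FiniteField.splits_iff_dvd_X_pow_card_sub_X {K : Type*} [Field K] [Fintype K]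
    {f : K[X]} (hf : f.Separable) : f.Splits ↔ f ∣ X ^ Fintype.card K - X := by
  have hX : (X ^ Fintype.card K - X : K[X]) ≠ 0 :=
    X_pow_card_sub_X_ne_zero K Fintype.one_lt_card
  refine ⟨fun hs => hs.dvd_of_roots_le_roots hf.ne_zero ?_, fun hdvd => ?_⟩
  · rw [roots_X_pow_card_sub_X, Multiset.le_iff_subset (nodup_roots hf)]
    exact fun x _ => Finset.mem_univ_val x
  · refine Splits.of_dvd ?_ hX hdvd
    rw [splits_iff_card_roots, roots_X_pow_card_sub_X,
      X_pow_card_sub_X_natDegree_eq K Fintype.one_lt_card]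
    rfl

theorem separable_X_pow_add_one_sub_C_mul_X_add_C {K : Type*} [Field K] {q : ℕ}
    (hq : (q : K) = 0) {B : K} (hB : B ≠ 0) :
    (X ^ (q + 1) - C B * X + C B : K[X]).Separable := by
  have hder : derivative (X ^ (q + 1) - C B * X + C B : K[X]) = X ^ q - C B := by
    simp [hq]
  -- `f - X * f' = B`
  refine ⟨C B⁻¹, -(C B⁻¹ * X), ?_⟩
  rw [hder]
  have hBB : C B⁻¹ * C B = (1 : K[X]) := by rw [← C_mul, inv_mul_cancel₀ hB, C_1]
  linear_combination hBB

section BluherMatrix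

variable {R : Type*} [CommRing R] (q : ℕ) (B : R)

/-- If `x ^ (q + 1) = B * (x - 1)`, then `z = x ^ q ^ j` satisfies
`z ^ q * z = B ^ q ^ j * (z - 1)`, so `z ^ q` is the image of `z` under the Möbius transformation
of this matrix. -/
def bluherMatrix (j : ℕ) : Matrix (Fin 2) (Fin 2) R :=
  !![B ^ q ^ j, -B ^ q ^ j; 1, 0]

def bluherMatrixProd : ℕ → Matrix (Fin 2) (Fin 2) R
  | 0 => 1
  | i + 1 => bluherMatrix q B i * bluherMatrixProd i

theorem bluherMatrixProd_succ_apply_zero (i : ℕ) (c : Fin 2) :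
    bluherMatrixProd q B (i + 1) 0 c =
      B ^ q ^ i * (bluherMatrixProd q B i 0 c - bluherMatrixProd q B i 1 c) := by
  simp only [bluherMatrixProd, bluherMatrix, Matrix.mul_apply, Fin.sum_univ_two, Matrix.of_apply,
    Matrix.cons_val', Matrix.cons_val_fin_one, Matrix.cons_val_zero, Matrix.cons_val_one, neg_mul]
  ring

theorem bluherMatrixProd_succ_apply_one (i : ℕ) (c : Fin 2) :
    bluherMatrixProd q B (i + 1) 1 c = bluherMatrixProd q B i 0 c := by
  simp [bluherMatrixProd, bluherMatrix, Matrix.mul_apply, Fin.sum_univ_two]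

theorem det_bluherMatrixProd (i : ℕ) :
    (bluherMatrixProd q B i).det = B ^ ∑ j ∈ range i, q ^ j := by
  induction i with
  | zero => simp [bluherMatrixProd]
  | succ i ih =>
    rw [bluherMatrixProd, Matrix.det_mul, ih, bluherMatrix, Matrix.det_fin_two_of, sum_range_succ,
      pow_add]
    ring

theorem bluherMatrixProd_add_two_apply_one_zero (i : ℕ) :
    bluherMatrixProd q B (i + 2) 1 0 =
      B ^ q ^ i * (bluherMatrixProd q B (i + 1) 1 0 - bluherMatrixProd q B i 1 0) := by
  rw [bluherMatrixProd_succ_apply_one, bluherMatrixProd_succ_apply_zero,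
    bluherMatrixProd_succ_apply_one]

section CharP

variable {p m : ℕ} [ExpChar R p]

theorem map_bluherMatrix (hq : q = p ^ m) (j : ℕ) :
    (bluherMatrix q B j).map (iterateFrobenius R p m) = bluherMatrix q B (j + 1) := by
  have hneg : (-1 : R) ^ q = -1 := hq ▸ neg_one_pow_expChar_pow R p m
  ext i c
  fin_cases i <;> fin_cases c <;>
    simp [bluherMatrix, iterateFrobenius_def, ← hq, neg_pow, hneg, ← pow_mul, ← pow_succ,
      zero_pow (hq ▸ (expChar_pow_pos R p m).ne')]

theorem bluherMatrixProd_succ_eq_map_mul (hq : q = p ^ m) (i : ℕ) :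
    bluherMatrixProd q B (i + 1) =
      (bluherMatrixProd q B i).map (iterateFrobenius R p m) * bluherMatrix q B 0 :=
  MonoidHom.succ_eq_map_mul_of_twisted_recurrence (iterateFrobenius R p m).mapMatrix.toMonoidHom
    (M := bluherMatrix q B) (N := bluherMatrixProd q B)
    (fun j => (map_bluherMatrix q B hq j).symm) rfl (fun _ => rfl) i

end CharP

end BluherMatrix

theorem bluherMatrixProd_succ_apply_one_zero {F : Type*} [Field F] (q : ℕ) {B : F} (hB : B ≠ 0)
    (i : ℕ) :
    bluherMatrixProd q B (i + 1) 1 0 =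
      B ^ (∑ j ∈ range i, q ^ j) * (bluherP q F (i + 1)).eval B⁻¹ := by
  induction i using Nat.twoStepInduction with
  | zero =>
    rw [bluherMatrixProd_succ_apply_one]
    simp [bluherMatrixProd, bluherP]
  | one =>
    rw [bluherMatrixProd_succ_apply_one, bluherMatrixProd_succ_apply_zero]
    simp [bluherMatrixProd, bluherP]
  | more i ih₁ ih₂ =>
    rw [bluherMatrixProd_add_two_apply_one_zero, ih₁, ih₂, bluherP, eval_sub, eval_mul,
      eval_pow, eval_X, sum_range_succ _ (i + 1), sum_range_succ, inv_pow]
    field_simp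
    ring

theorem exists_bluherMatrixProd_eq_scalar {F : Type*} [Field F] {p m q k : ℕ} [ExpChar F p]
    (hq : q = p ^ m) {B : F} (hB : B ≠ 0) (hBk : B ^ q ^ k = B)
    (hc : bluherMatrixProd q B k 1 0 = 0) :
    ∃ a ≠ 0, bluherMatrixProd q B k = Matrix.scalar (Fin 2) a := by
  have hM : bluherMatrix q B k = bluherMatrix q B 0 := by simp [bluherMatrix, hBk]
  have h := (bluherMatrixProd_succ_eq_map_mul q B hq k).symm.trans
    (show bluherMatrixProd q B (k + 1) = bluherMatrix q B 0 * bluherMatrixProd q B k by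
      rw [bluherMatrixProd, hM])
  have hq0 : q ≠ 0 := hq ▸ (expChar_pow_pos F p m).ne'
  have e00 := congrFun (congrFun h 0) 0
  have e01 := congrFun (congrFun h 0) 1
  have e11 := congrFun (congrFun h 1) 1
  simp only [Matrix.mul_apply, Fin.sum_univ_two, Matrix.map_apply, iterateFrobenius_def, ← hq,
    bluherMatrix, hc, zero_pow hq0, pow_zero, pow_one, Matrix.of_apply, Matrix.cons_val',
    Matrix.cons_val_zero, Matrix.cons_val_fin_one, Matrix.cons_val_one, mul_one, mul_zero,
    add_zero, mul_neg, neg_mul, zero_mul, neg_zero, one_mul] at e00 e01 e11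
  rw [← e11, zero_pow hq0, add_zero] at e00
  have ha : bluherMatrixProd q B k 0 0 ^ q = bluherMatrixProd q B k 0 0 :=
    mul_right_cancel₀ hB (by linear_combination e00)
  have hd : bluherMatrixProd q B k 1 1 = bluherMatrixProd q B k 0 0 :=
    mul_left_cancel₀ hB (by linear_combination e01 + B * ha - B * e11)
  have hdet := det_bluherMatrixProd q B k
  rw [Matrix.det_fin_two, ← e11, hd, hc] at hdet
  refine ⟨bluherMatrixProd q B k 0 0, 
    fun ha0 => pow_ne_zero (∑ j ∈ range k, q ^ j) hB ?_, ?_⟩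
  · rw [← hdet, ha0]
    ring
  · ext i j
    fin_cases i <;> fin_cases j <;> simp [← e11, hd, hc]

theorem pow_mul_bluherMatrixProd {F R : Type*} [CommRing F] [CommRing R] [Algebra F R]
    {p m q : ℕ} [ExpChar R p] (hq : q = p ^ m) {B : F} {x : R}
    (hx : x ^ (q + 1) = algebraMap F R B * (x - 1)) (i : ℕ) :
    x ^ q ^ i * (algebraMap F R (bluherMatrixProd q B i 1 0) * x +
        algebraMap F R (bluherMatrixProd q B i 1 1)) =
      algebraMap F R (bluherMatrixProd q B i 0 0) * x +
        algebraMap F R (bluherMatrixProd q B i 0 1) := by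
  induction i with
  | zero => simp [bluherMatrixProd]
  | succ i ih =>
    have hz : (x ^ q ^ i) ^ q * x ^ q ^ i = algebraMap F R (B ^ q ^ i) * (x ^ q ^ i - 1) := by
      have hqi : q ^ i = p ^ (m * i) := by rw [hq, pow_mul]
      calc (x ^ q ^ i) ^ q * x ^ q ^ i = (x ^ (q + 1)) ^ q ^ i := by ring
        _ = algebraMap F R (B ^ q ^ i) * (x ^ q ^ i - 1) := by
          rw [hx, mul_pow, map_pow, hqi, sub_pow_expChar_pow, one_pow]
    rw [pow_succ, pow_mul]
    simp only [bluherMatrixProd_succ_apply_zero, bluherMatrixProd_succ_apply_one, map_mul, map_sub]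
    generalize x ^ q ^ i = z at ih hz ⊢
    linear_combination (algebraMap F R (B ^ q ^ i) - z ^ q) * ih +
      (algebraMap F R (bluherMatrixProd q B i 1 0) * x +
        algebraMap F R (bluherMatrixProd q B i 1 1)) * hz

theorem AdjoinRoot.root_X_pow_add_one_sub_C_mul_X_add_C {F : Type*} [CommRing F] (q : ℕ) (B : F) :
    root (X ^ (q + 1) - C B * X + C B) ^ (q + 1) =
      algebraMap F _ B * (root (X ^ (q + 1) - C B * X + C B) - 1) := by
  have := mk_self (f := X ^ (q + 1) - C B * X + C B)
  simp only [map_add, map_sub, map_mul, map_pow, mk_X, mk_C] at this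
  rw [algebraMap_eq]
  linear_combination this

theorem X_pow_add_one_sub_C_mul_X_add_C_dvd_iff {F : Type*} [Field F] {p m q : ℕ} [ExpChar F p]
    (hq : q = p ^ m) (hq2 : 2 ≤ q) {B : F} (hB : B ≠ 0) {k : ℕ} (hBk : B ^ q ^ k = B) :
    (X ^ (q + 1) - C B * X + C B : F[X]) ∣ X ^ q ^ k - X ↔ bluherMatrixProd q B k 1 0 = 0 := by
  set f : F[X] := X ^ (q + 1) - C B * X + C B
  have hf : f.natDegree = q + 1 := by
    unfold f; compute_degree!
    simp [show q ≠ 0 by omega]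
  have : Nontrivial (AdjoinRoot f) :=
    AdjoinRoot.nontrivial f (ne_of_gt (natDegree_pos_iff_degree_pos.mp (by omega)))
  have : ExpChar (AdjoinRoot f) p := expChar_of_injective_algebraMap (algebraMap F _).injective p
  have key := pow_mul_bluherMatrixProd hq (AdjoinRoot.root_X_pow_add_one_sub_C_mul_X_add_C q B) k
  rw [← AdjoinRoot.mk_eq_zero, map_sub, map_pow, AdjoinRoot.mk_X, sub_eq_zero]
  constructor
  · intro hfix
    rw [hfix] at key
    set Q : F[X] := C (bluherMatrixProd q B k 1 0) * X ^ 2 +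
      C (bluherMatrixProd q B k 1 1 - bluherMatrixProd q B k 0 0) * X -
        C (bluherMatrixProd q B k 0 1)
    have hQ : Q = 0 := by
      refine eq_zero_of_dvd_of_natDegree_lt (p := f) ?_ ?_
      · rw [← AdjoinRoot.mk_eq_zero]
        simp only [Q, map_add, map_sub, map_mul, map_pow, AdjoinRoot.mk_X, AdjoinRoot.mk_C,
          ← AdjoinRoot.algebraMap_eq]
        linear_combination key
      · rw [hf]
        exact (show Q.natDegree ≤ 2 by unfold Q; compute_degree).trans_lt (by omega)
    simpa [Q] using congrArg (coeff · 2) hQ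
  · intro hc
    obtain ⟨a, ha, hN⟩ := exists_bluherMatrixProd_eq_scalar hq hB hBk hc
    simp only [hN, Matrix.scalar_apply, Matrix.diagonal_apply_eq, ne_eq, zero_ne_one,
      not_false_eq_true, Matrix.diagonal_apply_ne, one_ne_zero, map_zero, zero_mul, zero_add,
      add_zero] at key
    exact ((IsUnit.mk0 _ ha).map (algebraMap F _)).mul_right_cancel (key.trans (mul_comm _ _))

/-- **Theorem 3 of the paper.** Let `q = p^m` be a prime power, `k ≥ 3`, and `F` the field
with `q^k` elements. For every `B ≠ 0` in `F`, the polynomial `X^(q+1) - B·X + B` splits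
completely over `F` if and only if `P_k(1/B) = 0`. -/
theorem bluher_value_iff_Pk_root (p m q k : ℕ) (hp : p.Prime) (hm : 0 < m)
    (hq : q = p ^ m) (hk : 3 ≤ k)
    (F : Type*) [Field F] [Fintype F] (hF : Fintype.card F = q ^ k)
    (B : F) (hB : B ≠ 0) :
    ((X ^ (q + 1) - C B * X + C B : Polynomial F).map (RingHom.id F)).Splits ↔
      (bluherP q F k).eval B⁻¹ = 0 := by
  have : Fact p.Prime := ⟨hp⟩
  have : CharP F p := charP_of_card_eq_prime_pow (hF.trans (by rw [hq, ← pow_mul]))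
  have hq2 : 2 ≤ q := hq ▸ hp.two_le.trans (Nat.le_self_pow hm.ne' p)
  have hqF : (q : F) = 0 := by rw [hq, Nat.cast_pow, CharP.cast_eq_zero, zero_pow hm.ne']
  have hBk : B ^ q ^ k = B := hF ▸ FiniteField.pow_card B
  obtain ⟨i, rfl⟩ : ∃ i, k = i + 1 := ⟨k - 1, by omega⟩
  rw [map_id, FiniteField.splits_iff_dvd_X_pow_card_sub_X
      (separable_X_pow_add_one_sub_C_mul_X_add_C hqF hB), hF,
    X_pow_add_one_sub_C_mul_X_add_C_dvd_iff hq hq2 hB hBk,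
    bluherMatrixProd_succ_apply_one_zero q hB, mul_eq_zero, or_iff_right (pow_ne_zero _ hB)]
end

section
/- Let q be a prime power, F_B(X) = X^{q+1} - B·X + B with B ≠ 0, and set C = 1/B. With P_1 = 1, P_2 = 1, P_i = P_{i-1} - X^{q^{i-3}}·P_{i-2}, the following congruence holds modulo F_B for all i ≥ 2: X^{q^i} ≡ (P_{i+1}(C)·X - P_i(C)^q) / (C^{q^{i-1}}·(P_i(C)·X - P_{i-1}(C)^q)). -/
open Polynomial

section Aux

variable {p m q : ℕ} {F : Type*} [Field F] [CharP F p]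

lemma frobq_sub {R : Type*} [CommRing R] [CharP R p] (hp : p.Prime) (hq : q = p ^ m)
    (x y : R) : (x - y) ^ q = x ^ q - y ^ q := by
  haveI := Fact.mk hp
  subst hq
  exact sub_pow_char_pow_of_commute _ _ (Commute.all _ _)

lemma bluher_eval_rec (q : ℕ) {F : Type*} [Field F] (c : F) (n : ℕ) :
    (bluherP q F (n+3)).eval c
      = (bluherP q F (n+2)).eval c - c ^ q ^ n * (bluherP q F (n+1)).eval c := by
  show (bluherP q F (n+2) - X ^ q ^ n * bluherP q F (n+1)).eval c = _
  simp

lemma bluher_H (hp : p.Prime) (hq : q = p ^ m) (c : F) (n : ℕ) :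
    (bluherP q F (n+3)).eval c
      = ((bluherP q F (n+2)).eval c) ^ q - c * ((bluherP q F (n+1)).eval c) ^ (q * q) := by
  induction n using Nat.strong_induction_on with
  | _ n ih =>
  match n with
  | 0 =>
      have h1 : (bluherP q F 1).eval c = 1 := by simp [bluherP]
      have h2 : (bluherP q F 2).eval c = 1 := by simp [bluherP]
      rw [bluher_eval_rec, h1, h2]
      simp
  | 1 =>
      have h1 : (bluherP q F 1).eval c = 1 := by simp [bluherP]
      have h2 : (bluherP q F 2).eval c = 1 := by simp [bluherP]
      have h3 : (bluherP q F 3).eval c = 1 - c := by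
        rw [bluher_eval_rec, h1, h2]; ring
      rw [bluher_eval_rec, h2, h3, frobq_sub hp hq]
      ring
  | (n + 2) =>
      have H0 := ih n (by omega)
      have H1 := ih (n+1) (by omega)
      rw [show n+1+3 = n+4 from rfl, show n+1+2 = n+3 from rfl,
        show n+1+1 = n+2 from rfl] at H1
      have h4 := bluher_eval_rec q c (n+1)
      rw [show n+1+3 = n+4 from rfl, show n+1+2 = n+3 from rfl,
        show n+1+1 = n+2 from rfl] at h4
      have h3 := bluher_eval_rec q c n
      have h4q : ((bluherP q F (n+4)).eval c) ^ q
          = ((bluherP q F (n+3)).eval c) ^ q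
            - (c ^ q ^ (n+1)) ^ q * ((bluherP q F (n+2)).eval c) ^ q := by
        rw [h4, frobq_sub hp hq, mul_pow]
      have h3qq : ((bluherP q F (n+3)).eval c) ^ (q * q)
          = ((bluherP q F (n+2)).eval c) ^ (q * q)
            - ((c ^ q ^ n) ^ q) ^ q * ((bluherP q F (n+1)).eval c) ^ (q * q) := by
        rw [pow_mul, h3, frobq_sub hp hq, mul_pow, frobq_sub hp hq, mul_pow]
        ring
      rw [show n+2+3 = n+5 from rfl, show n+2+2 = n+4 from rfl,
        show n+2+1 = n+3 from rfl]
      linear_combination bluher_eval_rec q c (n+2) + H1 - h4q + c * h3qq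
        - c ^ q ^ (n+2) * H0

lemma bluher_main_aux (hp : p.Prime) (hm : 0 < m) (hq : q = p ^ m)
    (B : F) (hB : B ≠ 0) (j : ℕ) :
    (X ^ (q + 1) - C B * X + C B : Polynomial F) ∣
      (C (B⁻¹ ^ q ^ (j + 1)) *
          (C ((bluherP q F (j+2)).eval B⁻¹) * X - C (((bluherP q F (j+1)).eval B⁻¹) ^ q)))
        * X ^ q ^ (j+2)
      - (C ((bluherP q F (j+3)).eval B⁻¹) * X - C (((bluherP q F (j+2)).eval B⁻¹) ^ q)) := by
  have hq0 : q ≠ 0 := by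
    subst hq; exact pow_ne_zero _ hp.pos.ne'
  set c := B⁻¹ with hc
  set G : Polynomial F := C c * X ^ (q + 1) - (X - 1) with hGdef
  have hBB : (C B * C c : Polynomial F) = 1 := by
    rw [← C_mul, mul_inv_cancel₀ hB, C_1]
  have hG : (X ^ (q + 1) - C B * X + C B : Polynomial F) ∣ G := by
    refine ⟨C c, ?_⟩
    rw [hGdef]
    linear_combination (X - 1 : Polynomial F) * hBB
  have hGq : G ^ q = C (c ^ q) * X ^ ((q+1) * q) - (X ^ q - 1) := by
    rw [hGdef, frobq_sub hp hq, frobq_sub hp hq, mul_pow, ← pow_mul, one_pow, C_pow]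
  have h1 : (bluherP q F 1).eval c = 1 := by simp [bluherP]
  have h2 : (bluherP q F 2).eval c = 1 := by simp [bluherP]
  induction j with
  | zero =>
      have h3 : (bluherP q F 3).eval c = 1 - c := by
        rw [bluher_eval_rec q c 0, h1, h2]; ring
      have key : (C (c ^ q ^ (0 + 1)) *
          (C ((bluherP q F 2).eval c) * X - C (((bluherP q F 1).eval c) ^ q)))
            * X ^ q ^ 2
          - (C ((bluherP q F 3).eval c) * X - C (((bluherP q F 2).eval c) ^ q))
          = C c * X * G ^ q + G * (1 - C (c ^ q) * X ^ (q * q)) := by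
        rw [h1, h2, h3, hGq, hGdef]
        simp only [map_sub, map_one, C_pow, one_pow, C_1]
        ring
      rw [key]
      exact dvd_add ((hG.pow hq0).mul_left _) (hG.mul_right _)
  | succ j ih =>
      have hH0 := bluher_H hp hq c j
      have hH1 := bluher_H hp hq c (j+1)
      rw [show j+1+3 = j+4 from rfl, show j+1+2 = j+3 from rfl,
        show j+1+1 = j+2 from rfl] at hH1
      have key : (C (c ^ q ^ (j + 1 + 1)) *
          (C ((bluherP q F (j+1+2)).eval c) * X - C (((bluherP q F (j+1+1)).eval c) ^ q)))
            * X ^ q ^ (j+1+2)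
          - (C ((bluherP q F (j+1+3)).eval c) * X - C (((bluherP q F (j+1+2)).eval c) ^ q))
          = C c * X *
              ((C (c ^ q ^ (j + 1)) *
                  (C ((bluherP q F (j+2)).eval c) * X - C (((bluherP q F (j+1)).eval c) ^ q)))
                * X ^ q ^ (j+2)
              - (C ((bluherP q F (j+3)).eval c) * X - C (((bluherP q F (j+2)).eval c) ^ q))) ^ q
            + G * (C (((bluherP q F (j+3)).eval c) ^ q)
                - C (c ^ q ^ (j+2) * ((bluherP q F (j+2)).eval c) ^ q) * X ^ q ^ (j+3)) := by
        rw [show j+1+3 = j+4 from rfl, show j+1+2 = j+3 from rfl,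
          show j+1+1 = j+2 from rfl, hH1, hH0, hGdef]
        simp only [frobq_sub hp hq, mul_pow, map_sub, map_mul, map_pow, map_one, C_pow]
        ring
      rw [key]
      exact dvd_add ((ih.pow hq0).mul_left _) (hG.mul_right _)

end Aux

/-- **The key congruence modulo a Bluher polynomial.** Let `q = p^m` be a prime power, `F`
a field of characteristic `p`, `B ≠ 0` and `C = B⁻¹`.  Then, modulo
`F_B = X^(q+1) - B·X + B`, for all `i ≥ 2` we have
`X^(q^i) ≡ (P_{i+1}(C)·X - P_i(C)^q) / (C^(q^(i-1))·(P_i(C)·X - P_{i-1}(C)^q))`,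
stated with denominators cleared as a divisibility in `F[X]`. -/
theorem bluher_power_congruence (p m q : ℕ) (hp : p.Prime) (hm : 0 < m) (hq : q = p ^ m)
    (F : Type*) [Field F] [CharP F p] (B : F) (hB : B ≠ 0) (i : ℕ) (hi : 2 ≤ i) :
    (X ^ (q + 1) - C B * X + C B : Polynomial F) ∣
      (C (B⁻¹ ^ q ^ (i - 1)) *
          (C ((bluherP q F i).eval B⁻¹) * X - C (((bluherP q F (i - 1)).eval B⁻¹) ^ q)))
        * X ^ q ^ i
      - (C ((bluherP q F (i + 1)).eval B⁻¹) * X - C (((bluherP q F i).eval B⁻¹) ^ q)) := by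
  obtain ⟨j, rfl⟩ : ∃ j, i = j + 2 := ⟨i - 2, by omega⟩
  exact bluher_main_aux hp hm hq B hB j
end

section
/- Let q be a prime power, k ≥ 3, and a, b, c ∈ F_{q^k} with b ≠ a^q and c ≠ a·b. Then the substitution X ↦ ((a·b - c)/(b - a^q))·X - a transforms the polynomial X^{q+1} + a·X^q + b·X + c into a nonzero scalar multiple of X^{q+1} - B·X + B, where B = (b - a^q)^{q+1}/(c - a·b)^q. Consequently, X^{q+1} + a·X^q + b·X + c splits completely over F_{q^k} if and only if X^{q+1} - B·X + B does. -/
/-!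
By Frobenius, `(λX - a)^q = λ^q X^q - a^q` in characteristic `p`, so the substitution
`X ↦ λX - a` cancels the `X^q` term and leaves `λ^(q+1) X^(q+1) + λ(b - a^q) X + (c - ab)`.
The choice of `λ` makes the last two coefficients opposite, `λ(b - a^q) = ab - c`, and
`(-1)^(q+1) = 1` gives `λ^(q+1) B = c - ab`. An affine substitution and a nonzero scalar factor
do not affect splitting.
-/

open Polynomial

theorem neg_pow_expChar_pow_succ {R : Type*} [CommRing R] (p : ℕ) [ExpChar R p] (n : ℕ)
    (x : R) : (-x) ^ (p ^ n + 1) = x ^ (p ^ n + 1) := by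
  rw [neg_pow, pow_succ, neg_one_pow_expChar_pow]
  ring

theorem neg_div_pow_succ_mul_div_pow_of_expChar {K : Type*} [Field K] (p : ℕ) [ExpChar K p]
    (n : ℕ) {u v : K} (hv : v ≠ 0) :
    (-u / v) ^ (p ^ n + 1) * (v ^ (p ^ n + 1) / u ^ p ^ n) = u := by
  rcases eq_or_ne u 0 with rfl | hu
  · simp
  rw [div_pow, neg_pow_expChar_pow_succ, pow_succ]
  field_simp

namespace Polynomial

theorem comp_C_mul_X_sub_C_of_expChar {R : Type*} [CommRing R] (p : ℕ) [ExpChar R p] (n : ℕ)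
    (l a b c : R) :
    (X ^ (p ^ n + 1) + C a * X ^ p ^ n + C b * X + C c).comp (C l * X - C a)
      = C (l ^ (p ^ n + 1)) * X ^ (p ^ n + 1) + C (l * (b - a ^ p ^ n)) * X + C (c - a * b) := by
  have frobenius : (C l * X - C a) ^ p ^ n = C (l ^ p ^ n) * X ^ p ^ n - C (a ^ p ^ n) := by
    rw [sub_pow_expChar_pow, mul_pow, C_pow, C_pow]
  simp only [add_comp, mul_comp, pow_comp, X_comp, C_comp, pow_succ, frobenius, C_mul, C_sub]
  ring

theorem degree_C_mul_X_sub_C {R : Type*} [Ring R] [Nontrivial R] {l : R} (hl : l ≠ 0) (a : R) :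
    (C l * X - C a).degree = 1 := by
  rw [degree_sub_C] <;> simp [degree_C_mul_X hl]

theorem splits_C_mul_iff {K : Type*} [Field K] {μ : K} (hμ : μ ≠ 0) {f : K[X]} :
    (C μ * f).Splits ↔ f.Splits := by
  refine ⟨fun h ↦ ?_, fun h ↦ h.C_mul μ⟩
  simpa [← mul_assoc, ← C_mul, hμ] using h.C_mul μ⁻¹

theorem splits_iff_of_comp_eq_C_mul {K : Type*} [Field K] {f g h : K[X]} {μ : K}
    (hg : g.degree = 1) (hμ : μ ≠ 0) (hfg : f.comp g = C μ * h) : f.Splits ↔ h.Splits := by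
  rw [splits_iff_comp_splits_of_degree_eq_one hg, hfg, splits_C_mul_iff hμ]

end Polynomial

theorem transform_to_bluher_general (p m q : ℕ) (hp : p.Prime) (hq : q = p ^ m)
    (F : Type*) [Field F] [CharP F p]
    (a b c : F) (hb : b ≠ a ^ q) (hc : c ≠ a * b) :
    ∃ μ : F, μ ≠ 0 ∧
      (X ^ (q + 1) + C a * X ^ q + C b * X + C c : Polynomial F).comp
          (C ((a * b - c) / (b - a ^ q)) * X - C a)
        = C μ * (X ^ (q + 1) - C ((b - a ^ q) ^ (q + 1) / (c - a * b) ^ q) * X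
            + C ((b - a ^ q) ^ (q + 1) / (c - a * b) ^ q)) ∧
      (((X ^ (q + 1) + C a * X ^ q + C b * X + C c : Polynomial F).map (RingHom.id F)).Splits ↔
        ((X ^ (q + 1) - C ((b - a ^ q) ^ (q + 1) / (c - a * b) ^ q) * X
            + C ((b - a ^ q) ^ (q + 1) / (c - a * b) ^ q) : Polynomial F).map
          (RingHom.id F)).Splits) := by
  have : Fact p.Prime := ⟨hp⟩
  subst hq
  set l := (a * b - c) / (b - a ^ p ^ m)
  set B := (b - a ^ p ^ m) ^ (p ^ m + 1) / (c - a * b) ^ p ^ m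
  have hba : b - a ^ p ^ m ≠ 0 := sub_ne_zero.mpr hb
  have hl : l ≠ 0 := div_ne_zero (sub_ne_zero.mpr hc.symm) hba
  have hlB : l ^ (p ^ m + 1) * B = c - a * b := by
    simpa only [neg_sub] using neg_div_pow_succ_mul_div_pow_of_expChar p m (u := c - a * b) hba
  have hcomp : (X ^ (p ^ m + 1) + C a * X ^ p ^ m + C b * X + C c).comp (C l * X - C a)
      = C (l ^ (p ^ m + 1)) * (X ^ (p ^ m + 1) - C B * X + C B) := by
    rw [comp_C_mul_X_sub_C_of_expChar, div_mul_cancel₀ _ hba, ← neg_sub, ← hlB]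
    simp only [C_neg, C_mul]
    ring
  refine ⟨_, pow_ne_zero _ hl, hcomp, ?_⟩
  simp only [Polynomial.map_id]
  exact splits_iff_of_comp_eq_C_mul (degree_C_mul_X_sub_C hl a) (pow_ne_zero _ hl) hcomp

/-- **Transformation to a Bluher polynomial.** Let `q = p^m` be a prime power, `k ≥ 3`, and
`F` the field with `q^k` elements (of characteristic `p`).  Let `a, b, c ∈ F` with
`b ≠ a^q` and `c ≠ a·b`.  Then the substitution `X ↦ λ·X - a`, where
`λ = (a·b - c)/(b - a^q)`, transforms `X^(q+1) + a·X^q + b·X + c` into a nonzero scalar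
multiple of `X^(q+1) - B·X + B`, where `B = (b - a^q)^(q+1)/(c - a·b)^q`.  Consequently,
`X^(q+1) + a·X^q + b·X + c` splits completely over `F` iff `X^(q+1) - B·X + B` does. -/
theorem transform_to_bluher (p m q k : ℕ) (hp : p.Prime) (hm : 0 < m) (hq : q = p ^ m)
    (hk : 3 ≤ k) (F : Type*) [Field F] [Fintype F] [CharP F p]
    (hF : Fintype.card F = q ^ k)
    (a b c : F) (hb : b ≠ a ^ q) (hc : c ≠ a * b) :
    ∃ μ : F, μ ≠ 0 ∧
      (X ^ (q + 1) + C a * X ^ q + C b * X + C c : Polynomial F).comp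
          (C ((a * b - c) / (b - a ^ q)) * X - C a)
        = C μ * (X ^ (q + 1) - C ((b - a ^ q) ^ (q + 1) / (c - a * b) ^ q) * X
            + C ((b - a ^ q) ^ (q + 1) / (c - a * b) ^ q)) ∧
      (((X ^ (q + 1) + C a * X ^ q + C b * X + C c : Polynomial F).map (RingHom.id F)).Splits ↔
        ((X ^ (q + 1) - C ((b - a ^ q) ^ (q + 1) / (c - a * b) ^ q) * X
            + C ((b - a ^ q) ^ (q + 1) / (c - a * b) ^ q) : Polynomial F).map
          (RingHom.id F)).Splits) :=
  transform_to_bluher_general p m q hp hq F a b c hb hc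
end

section
/- Let q be a prime power, k ≥ 3, and suppose B ∈ F_{q^k}^× is such that X^{q+1} - B·X + B splits completely over F_{q^k}, with roots z_1, ..., z_{q+1}. Then for a, b, c ∈ F_{q^k} with b ≠ a^q, c ≠ a·b and B = (b - a^q)^{q+1}/(c - a·b)^q, the set of roots of X^{q+1} + a·X^q + b·X + c in F_{q^k} is exactly { λ·z_i - a : 1 ≤ i ≤ q+1 }, where λ = (a·b - c)/(b - a^q). -/
open Polynomial

/-!
Since `x ↦ x ^ q` is additive, the shift `X ↦ X - a` removes the `X ^ q` term of
`f = X ^ (q+1) + a X ^ q + b X + c`: `f(x - a) = x ^ (q+1) + (b - a^q) x + (c - a b)`.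
Scaling `x = λ z` with `λ (b - a^q) = -(c - a b)` and `λ ^ (q+1) B = c - a b` turns this into
`λ ^ (q+1) (z ^ (q+1) - B z + B)`, so the affine bijection `z ↦ λ z - a` carries the roots of the
Bluher polynomial onto those of `f`.
-/

section ExpChar

variable (p n : ℕ)

theorem neg_one_pow_expChar_pow_add_one (R : Type*) [Ring R] [ExpChar R p] :
    (-1 : R) ^ (p ^ n + 1) = 1 := by
  rw [pow_succ, neg_one_pow_expChar_pow, neg_one_mul, neg_neg]

variable {R : Type*} [CommRing R] [ExpChar R p]

theorem quadrinomial_comp_sub_eq (a b c x : R) :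
    (x - a) ^ (p ^ n + 1) + a * (x - a) ^ p ^ n + b * (x - a) + c =
      x ^ (p ^ n + 1) + (b - a ^ p ^ n) * x + (c - a * b) := by
  rw [pow_succ, sub_pow_expChar_pow]
  ring

theorem quadrinomial_comp_affine_eq_bluher {a b c L B : R}
    (hLu : L * (b - a ^ p ^ n) = -(c - a * b)) (hLB : L ^ (p ^ n + 1) * B = c - a * b) (z : R) :
    (L * z - a) ^ (p ^ n + 1) + a * (L * z - a) ^ p ^ n + b * (L * z - a) + c =
      L ^ (p ^ n + 1) * (z ^ (p ^ n + 1) - B * z + B) := by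
  rw [quadrinomial_comp_sub_eq, mul_pow]
  linear_combination (z - 1) * hLB + z * hLu

theorem neg_div_pow_expChar_pow_add_one_mul {F : Type*} [Field F] [ExpChar F p] {u v : F}
    (hu : u ≠ 0) (hv : v ≠ 0) :
    (-v / u) ^ (p ^ n + 1) * (u ^ (p ^ n + 1) / v ^ p ^ n) = v := by
  rw [div_pow, neg_pow, neg_one_pow_expChar_pow_add_one, one_mul]
  field_simp
  ring

end ExpChar

theorem setOf_eq_zero_eq_image_affine {F : Type*} [Field F] {f g : F → F} {L μ : F} (a : F)
    (hL : L ≠ 0) (hμ : μ ≠ 0) (h : ∀ z, f (L * z - a) = μ * g z) :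
    {r | f r = 0} = (fun z => L * z - a) '' {z | g z = 0} := by
  have hsurj : Function.Surjective fun z => L * z - a :=
    fun r => ⟨(r + a) / L, by field_simp; ring⟩
  rw [← Set.image_preimage_eq {r | f r = 0} hsurj]
  congr 1
  ext z
  simp [h, hμ]

theorem roots_via_bluher_general (p m q : ℕ) (hp : p.Prime) (hq : q = p ^ m)
    (F : Type*) [Field F] [CharP F p]
    (B : F)
    (a b c : F) (hb : b ≠ a ^ q) (hc : c ≠ a * b)
    (hBval : B = (b - a ^ q) ^ (q + 1) / (c - a * b) ^ q) :
    {r : F | (X ^ (q + 1) + C a * X ^ q + C b * X + C c : Polynomial F).eval r = 0} =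
      (fun z => (a * b - c) / (b - a ^ q) * z - a) ''
        {z : F | (X ^ (q + 1) - C B * X + C B : Polynomial F).eval z = 0} := by
  have : ExpChar F p := .prime hp
  subst hq
  have hu : b - a ^ p ^ m ≠ 0 := sub_ne_zero.mpr hb
  have hv : c - a * b ≠ 0 := sub_ne_zero.mpr hc
  have hL : (a * b - c) / (b - a ^ p ^ m) = -(c - a * b) / (b - a ^ p ^ m) := by ring
  have hLu : (a * b - c) / (b - a ^ p ^ m) * (b - a ^ p ^ m) = -(c - a * b) := by
    rw [hL, div_mul_cancel₀ _ hu]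
  have hLB : ((a * b - c) / (b - a ^ p ^ m)) ^ (p ^ m + 1) * B = c - a * b := by
    rw [hL, hBval, neg_div_pow_expChar_pow_add_one_mul p m hu hv]
  have hL0 : (a * b - c) / (b - a ^ p ^ m) ≠ 0 := by
    rw [hL]
    exact div_ne_zero (neg_ne_zero.mpr hv) hu
  simp only [eval_add, eval_sub, eval_mul, eval_pow, eval_C, eval_X]
  exact setOf_eq_zero_eq_image_affine a hL0 (pow_ne_zero _ hL0)
    (quadrinomial_comp_affine_eq_bluher p m hLu hLB)

/-- **Roots via the Bluher transformation.** Let `q = p^m` be a prime power, `k ≥ 3`, and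
`F` the field with `q^k` elements.  Suppose `B ≠ 0` is such that `X^(q+1) - B·X + B`
splits completely over `F`.  Then for `a, b, c ∈ F` with `b ≠ a^q`, `c ≠ a·b` and
`B = (b - a^q)^(q+1)/(c - a·b)^q`, the set of roots in `F` of
`X^(q+1) + a·X^q + b·X + c` is exactly `{ λ·z - a : z a root of X^(q+1) - B·X + B }`,
where `λ = (a·b - c)/(b - a^q)`. -/
theorem roots_via_bluher (p m q k : ℕ) (hp : p.Prime) (hm : 0 < m) (hq : q = p ^ m)
    (hk : 3 ≤ k) (F : Type*) [Field F] [Fintype F] [CharP F p]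
    (hF : Fintype.card F = q ^ k)
    (B : F) (hB : B ≠ 0)
    (hsplit : ((X ^ (q + 1) - C B * X + C B : Polynomial F).map (RingHom.id F)).Splits)
    (a b c : F) (hb : b ≠ a ^ q) (hc : c ≠ a * b)
    (hBval : B = (b - a ^ q) ^ (q + 1) / (c - a * b) ^ q) :
    {r : F | (X ^ (q + 1) + C a * X ^ q + C b * X + C c : Polynomial F).eval r = 0} =
      (fun z => (a * b - c) / (b - a ^ q) * z - a) ''
        {z : F | (X ^ (q + 1) - C B * X + C B : Polynomial F).eval z = 0} :=
  roots_via_bluher_general p m q hp hq F B a b c hb hc hBval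
end
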